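/- arXiv:1308.6820 — 3 statements merged into one kernel-verified Lean document; each statement's English description precedes it below -/
import Mathlib

section
/- Let $D \ge 1$, $\delta > 0$, $a,b,\gamma,\varepsilon \in \mathbb{R}$ with $a \le b$ and $\varepsilon - \gamma < 0$. Define, for integers $m \ge n$, $\lambda_{m,n} = \sum_{k=-\infty}^{n-1} D e^{a(m-k-1)+\varepsilon|k+1|} \cdot \delta e^{-\gamma|k+1|} \cdot D e^{b(k-n)+\varepsilon|n|} + \sum_{k=n}^{m-1} D e^{a(m-k-1)+\varepsilon|k+1|} \cdot \delta e^{-\gamma|k+1|} \cdot D e^{a(k-n)+\varepsilon|n|} + \sum_{k=m}^{\infty} D e^{b(m-k-1)+\varepsilon|k+1|} \cdot \delta e^{-\gamma|k+1|} \cdot D e^{a(k-n)+\varepsilon|n|}$. Then $\lambda_{m,n} \le D e^{a(m-n)+\varepsilon|n|} \cdot D\delta e^{-a}(e^{\varepsilon-\gamma}+1)(1-e^{\varepsilon-\gamma})^{-1}$ for all $m \ge n$. -/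
/-!
Write `q = e^{ε-γ} < 1`. After pulling out `D²δ`, each summand of `λ_{m,n}` has exponent at most
`a(m-n) + ε|n| - a + (ε-γ)|k+1|`: in the middle range this is an equality, and in the two tails
the excess is `(b-a)(k-n)` resp. `(b-a)(m-k-1)`, which is nonpositive there because `a ≤ b`.
Since the three ranges of `k` partition `ℤ`, `λ_{m,n}` is at most the constant times the two-sided
geometric series `∑_{k ∈ ℤ} q^{|k+1|} = (1+q)/(1-q)`.
-/

open Real

theorem hasSum_pow_natAbs {q : ℝ} (hq₀ : 0 ≤ q) (hq₁ : q < 1) :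
    HasSum (fun j : ℤ => q ^ j.natAbs) ((1 + q) / (1 - q)) := by
  have hnat : HasSum (fun j : ℕ => q ^ (j : ℤ).natAbs) (1 - q)⁻¹ := by
    simpa only [Int.natAbs_natCast] using hasSum_geometric_of_lt_one hq₀ hq₁
  have hneg : HasSum (fun j : ℕ => q ^ (-((j : ℤ) + 1)).natAbs) (q * (1 - q)⁻¹) := by
    have hnatAbs : ∀ j : ℕ, (-((j : ℤ) + 1)).natAbs = j + 1 := by omega
    simpa only [hnatAbs, pow_succ'] using (hasSum_geometric_of_lt_one hq₀ hq₁).mul_left q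
  rw [add_div, div_eq_mul_inv, one_mul, div_eq_mul_inv]
  exact hnat.of_nat_of_neg_add_one hneg

theorem hasSum_exp_mul_abs_int_add {c : ℝ} (hc : c < 0) (j : ℤ) :
    HasSum (fun k : ℤ => exp (c * |((k + j : ℤ) : ℝ)|)) ((1 + exp c) / (1 - exp c)) := by
  have h := hasSum_pow_natAbs (exp_pos c).le (exp_lt_one_iff.mpr hc)
  rw [← (Equiv.addRight j).hasSum_iff] at h
  convert h using 2 with k
  rw [Function.comp_apply, Equiv.coe_addRight, ← exp_nat_mul, Nat.cast_natAbs, Int.cast_abs,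
    mul_comm]

theorem hasSum_Iio_add_Ico_add_Ici {α : Type*} [AddCommMonoid α] [TopologicalSpace α]
    [ContinuousAdd α] {f : ℤ → α} {n m : ℤ} (hnm : n ≤ m) {a c : α}
    (ha : HasSum (fun k : {k : ℤ // k < n} => f k) a)
    (hc : HasSum (fun k : {k : ℤ // m ≤ k} => f k) c) :
    HasSum f (a + ∑ k ∈ Finset.Ico n m, f k + c) := by
  have hb : HasSum (f ∘ (↑) : Set.Ico n m → α) (∑ k ∈ Finset.Ico n m, f k) := by
    rw [← Finset.coe_Ico]
    exact (Finset.Ico n m).hasSum f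
  have hdisj : Disjoint (Set.Iio n) (Set.Ico n m) :=
    Set.disjoint_left.mpr fun _ hk hk' => (not_le.mpr hk) hk'.1
  have hcompl : IsCompl (Set.Iio n ∪ Set.Ico n m) (Set.Ici m) := by
    rw [Set.Iio_union_Ico_eq_Iio hnm, ← Set.compl_Ici]
    exact isCompl_compl.symm
  exact (ha.add_disjoint hdisj hb).add_isCompl hcompl hc

theorem tsum_Iio_add_sum_Ico_add_tsum_Ici_le {n m : ℤ} {f₁ : {k : ℤ // k < n} → ℝ}
    {f₂ g : ℤ → ℝ} {f₃ : {k : ℤ // m ≤ k} → ℝ} (hnm : n ≤ m) {s : ℝ} (hg : HasSum g s)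
    (h₁ : ∀ k : {k : ℤ // k < n}, f₁ k ∈ Set.Icc 0 (g k)) (h₂ : ∀ k, f₂ k ≤ g k)
    (h₃ : ∀ k : {k : ℤ // m ≤ k}, f₃ k ∈ Set.Icc 0 (g k)) :
    (∑' k : {k : ℤ // k < n}, f₁ k) + ∑ k ∈ Finset.Ico n m, f₂ k
      + ∑' k : {k : ℤ // m ≤ k}, f₃ k ≤ s := by
  have hg₁ : Summable (fun k : {k : ℤ // k < n} => g k) := hg.summable.subtype _
  have hg₃ : Summable (fun k : {k : ℤ // m ≤ k} => g k) := hg.summable.subtype _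
  have hf₁ : Summable f₁ :=
    hg₁.of_nonneg_of_le (fun k => (h₁ k).1) (fun k => (h₁ k).2)
  have hf₃ : Summable f₃ :=
    hg₃.of_nonneg_of_le (fun k => (h₃ k).1) (fun k => (h₃ k).2)
  rw [← (hasSum_Iio_add_Ico_add_Ici hnm hg₁.hasSum hg₃.hasSum).unique hg]
  refine add_le_add (add_le_add ?_ (Finset.sum_le_sum fun k _ => h₂ k)) ?_
  · exact hf₁.tsum_le_tsum (fun k => (h₁ k).2) hg₁
  · exact hf₃.tsum_le_tsum (fun k => (h₃ k).2) hg₃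

theorem mul_exp_mul_mul_exp_mem_Icc {D δ u v w t : ℝ} (hδ : 0 ≤ δ) (h : u + v + w ≤ t) :
    D * exp u * (δ * exp v) * (D * exp w) ∈ Set.Icc 0 (D * D * δ * exp t) := by
  rw [show D * exp u * (δ * exp v) * (D * exp w) = D * D * δ * exp (u + v + w) by
    rw [exp_add, exp_add]; ring]
  have hDDδ : 0 ≤ D * D * δ := mul_nonneg (mul_self_nonneg D) hδ
  exact ⟨by positivity, by gcongr⟩

theorem stmt_1_general (D δ a b γ ε : ℝ) (hδ : 0 < δ) (hab : a ≤ b)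
    (heg : ε - γ < 0) (m n : ℤ) (hmn : n ≤ m) :
    (∑' k : {k : ℤ // k < n},
        D * exp (a * ((m : ℝ) - (k : ℤ) - 1) + ε * |((k : ℤ) : ℝ) + 1|) *
          (δ * exp (-γ * |((k : ℤ) : ℝ) + 1|)) *
          (D * exp (b * (((k : ℤ) : ℝ) - n) + ε * |(n : ℝ)|)))
      + (∑ k ∈ Finset.Ico n m,
        D * exp (a * ((m : ℝ) - k - 1) + ε * |(k : ℝ) + 1|) *
          (δ * exp (-γ * |(k : ℝ) + 1|)) *
          (D * exp (a * ((k : ℝ) - n) + ε * |(n : ℝ)|)))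
      + (∑' k : {k : ℤ // m ≤ k},
        D * exp (b * ((m : ℝ) - (k : ℤ) - 1) + ε * |((k : ℤ) : ℝ) + 1|) *
          (δ * exp (-γ * |((k : ℤ) : ℝ) + 1|)) *
          (D * exp (a * (((k : ℤ) : ℝ) - n) + ε * |(n : ℝ)|)))
      ≤ D * exp (a * ((m : ℝ) - n) + ε * |(n : ℝ)|) *
          (D * δ * exp (-a) * (exp (ε - γ) + 1) * (1 - exp (ε - γ))⁻¹) := by
  set K : ℝ := a * ((m : ℝ) - n) + ε * |(n : ℝ)| - a
  have hg : HasSum (fun k : ℤ => D * D * δ * exp (K + (ε - γ) * |(k : ℝ) + 1|))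
      (D * D * δ * exp K * ((1 + exp (ε - γ)) / (1 - exp (ε - γ)))) := by
    simpa only [exp_add, mul_assoc, Int.cast_add, Int.cast_one] using
      (hasSum_exp_mul_abs_int_add heg 1).mul_left (D * D * δ * exp K)
  refine (tsum_Iio_add_sum_Ico_add_tsum_Ici_le hmn hg ?_ ?_ ?_).trans_eq ?_
  · rintro ⟨k, hk⟩
    have hkn : (k : ℝ) ≤ n := by exact_mod_cast hk.le
    exact mul_exp_mul_mul_exp_mem_Icc hδ.le
      (by nlinarith [mul_nonneg (sub_nonneg.2 hab) (sub_nonneg.2 hkn)])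
  · intro k
    exact (mul_exp_mul_mul_exp_mem_Icc hδ.le (by linarith)).2
  · rintro ⟨k, hk⟩
    have hmk : (m : ℝ) ≤ k := by exact_mod_cast hk
    exact mul_exp_mul_mul_exp_mem_Icc hδ.le
      (by nlinarith [mul_nonneg (sub_nonneg.2 hab) (sub_nonneg.2 hmk)])
  · simp only [K, sub_eq_add_neg, exp_add]
    ring

/-- Series estimate for `λ_{m,n}` in the robustness of nonuniform exponential dichotomies
on `ℤ`. -/
theorem stmt_1 (D δ a b γ ε : ℝ) (hD : 1 ≤ D) (hδ : 0 < δ) (hab : a ≤ b)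
    (heg : ε - γ < 0) (m n : ℤ) (hmn : n ≤ m) :
    (∑' k : {k : ℤ // k < n},
        D * exp (a * ((m : ℝ) - (k : ℤ) - 1) + ε * |((k : ℤ) : ℝ) + 1|) *
          (δ * exp (-γ * |((k : ℤ) : ℝ) + 1|)) *
          (D * exp (b * (((k : ℤ) : ℝ) - n) + ε * |(n : ℝ)|)))
      + (∑ k ∈ Finset.Ico n m,
        D * exp (a * ((m : ℝ) - k - 1) + ε * |(k : ℝ) + 1|) *
          (δ * exp (-γ * |(k : ℝ) + 1|)) *
          (D * exp (a * ((k : ℝ) - n) + ε * |(n : ℝ)|)))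
      + (∑' k : {k : ℤ // m ≤ k},
        D * exp (b * ((m : ℝ) - (k : ℤ) - 1) + ε * |((k : ℤ) : ℝ) + 1|) *
          (δ * exp (-γ * |((k : ℤ) : ℝ) + 1|)) *
          (D * exp (a * (((k : ℤ) : ℝ) - n) + ε * |(n : ℝ)|)))
      ≤ D * exp (a * ((m : ℝ) - n) + ε * |(n : ℝ)|) *
          (D * δ * exp (-a) * (exp (ε - γ) + 1) * (1 - exp (ε - γ))⁻¹) :=
  stmt_1_general D δ a b γ ε hδ hab heg m n hmn
end

section
/- Let $D \ge 1$, $\delta > 0$, $a \le b \le 0$, $\varepsilon \ge 0$, $\gamma \in \mathbb{R}$ with $\varepsilon - \gamma < -1$. Set $a_{m,n} = D(m-n+1)^a(|n|+1)^{\varepsilon}$ for $m \ge n$, $b_{m,n} = D(n-m+1)^b(|n|+1)^{\varepsilon}$ for $m \le n$, and $\|B_k\| := \delta(|k+1|+1)^{-\gamma}$. Then for all integers $m \ge n$, $\sum_{k=-\infty}^{n-1} a_{m,k+1}\|B_k\| b_{k,n} + \sum_{k=n}^{m-1} a_{m,k+1}\|B_k\| a_{k,n} + \sum_{k=m}^{\infty}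 b_{m,k+1}\|B_k\| a_{k,n} \le 2^{-a} D^2 \delta (m-n+1)^a (|n|+1)^{\varepsilon} (2\zeta_{\gamma-\varepsilon}-1)$, where $\zeta_{\gamma-\varepsilon} = \sum_{k=1}^{\infty} k^{\varepsilon-\gamma}$. -/
/-!
After merging the two powers of `|k+1|+1`, each summand is
`D²δ(|n|+1)^ε (|k+1|+1)^(ε-γ)` times a product of two numbers `x, y ≥ 1` raised to nonpositive
exponents, and this product is at most `2^(-a) (m-n+1)^a` on each of the three ranges of `k`:
in the middle range `x + y = m - n + 1`, so `xy ≥ (x+y)/2`; on the two outer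
ranges one factor is at most `(m-n+1)^a` and the other at most `1`. Hence the three sums are
dominated by the single sum over `ℤ` of `(|k+1|+1)^(ε-γ)`, which equals `ζ + (ζ - 1)`.
-/

open Real

theorem rpow_mul_rpow_le_two_rpow_neg_mul_rpow_of_add_eq {a s x y : ℝ} (ha : a ≤ 0)
    (hx : 1 ≤ x) (hy : 1 ≤ y) (hxy : x + y = s) : x ^ a * y ^ a ≤ 2 ^ (-a) * s ^ a := by
  subst hxy
  have hprod : (x + y) / 2 ≤ x * y := by nlinarith
  calc x ^ a * y ^ a = (x * y) ^ a := (mul_rpow (by linarith) (by linarith)).symm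
    _ ≤ ((x + y) / 2) ^ a := rpow_le_rpow_of_nonpos (by linarith) hprod ha
    _ = 2 ^ (-a) * (x + y) ^ a := by
      rw [div_rpow (by linarith) zero_le_two, rpow_neg zero_le_two, div_eq_inv_mul]

theorem rpow_mul_rpow_le_two_rpow_neg_mul_rpow_of_le {a b s x y : ℝ} (ha : a ≤ 0) (hb : b ≤ 0)
    (hs : 0 < s) (hsx : s ≤ x) (hy : 1 ≤ y) : x ^ a * y ^ b ≤ 2 ^ (-a) * s ^ a := by
  have hsa : 0 ≤ s ^ a := rpow_nonneg hs.le a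
  calc x ^ a * y ^ b ≤ s ^ a * 1 :=
        mul_le_mul (rpow_le_rpow_of_nonpos hs hsx ha) (rpow_le_one_of_one_le_of_nonpos hy hb)
          (rpow_nonneg (by linarith) b) hsa
    _ ≤ 2 ^ (-a) * s ^ a := by
      rw [mul_one]
      exact le_mul_of_one_le_left hsa (one_le_rpow one_le_two (by linarith))

section KernelTerm

variable {D δ ε γ u v X Y : ℝ}

theorem kernel_term_eq (hu : 0 < u) :
    D * X * u ^ ε * (δ * u ^ (-γ)) * (D * Y * v ^ ε)
      = D ^ 2 * δ * v ^ ε * u ^ (ε - γ) * (X * Y) := by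
  rw [sub_eq_add_neg, rpow_add hu]
  ring

theorem kernel_term_mem_Icc {c : ℝ} (hδ : 0 ≤ δ) (hu : 0 < u) (hv : 0 ≤ v) (hX : 0 ≤ X)
    (hY : 0 ≤ Y) (hXY : X * Y ≤ c) :
    D * X * u ^ ε * (δ * u ^ (-γ)) * (D * Y * v ^ ε)
      ∈ Set.Icc 0 (D ^ 2 * δ * v ^ ε * c * u ^ (ε - γ)) := by
  have := rpow_nonneg hv ε
  rw [kernel_term_eq hu]
  refine ⟨by positivity, ?_⟩
  calc _ ≤ D ^ 2 * δ * v ^ ε * u ^ (ε - γ) * c := by gcongr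
    _ = D ^ 2 * δ * v ^ ε * c * u ^ (ε - γ) := by ring

end KernelTerm

theorem tsum_le_tsum_of_nonneg_of_le {ι : Type*} {f g : ι → ℝ} (hf : ∀ i, 0 ≤ f i)
    (hfg : ∀ i, f i ≤ g i) (hg : Summable g) : ∑' i, f i ≤ ∑' i, g i :=
  (hg.of_nonneg_of_le hf hfg).tsum_le_tsum hfg hg

theorem Summable.tsum_Iio_add_sum_Ico_add_tsum_Ici {ι α : Type*} [LinearOrder ι]
    [LocallyFiniteOrder ι] [AddCommGroup α] [UniformSpace α] [IsUniformAddGroup α]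
    [CompleteSpace α] [T2Space α] {f : ι → α} (hf : Summable f) {n m : ι} (hnm : n ≤ m) :
    ∑' k : Set.Iio n, f k + ∑ k ∈ Finset.Ico n m, f k + ∑' k : Set.Ici m, f k = ∑' k, f k := by
  have hsplit :=
    Summable.tsum_add_tsum_compl (s := Set.Iio n) (hf.subtype _) (hf.subtype _)
  rw [Set.compl_Iio, ← Set.Ico_union_Ici_eq_Ici hnm,
    Summable.tsum_union_disjoint ((Set.Iio_disjoint_Ici le_rfl).mono_left Set.Ico_subset_Iio_self)
      (hf.subtype _) (hf.subtype _),
    ← Finset.coe_Ico, Finset.tsum_subtype', ← add_assoc] at hsplit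
  exact hsplit

theorem hasSum_int_abs_add_one_rpow {p : ℝ} (hp : p < -1) :
    HasSum (fun k : ℤ => (|(k : ℝ) + 1| + 1) ^ p) (2 * ∑' k : ℕ, ((k : ℝ) + 1) ^ p - 1) := by
  set ζ := ∑' k : ℕ, ((k : ℝ) + 1) ^ p
  have hζ : HasSum (fun k : ℕ => ((k : ℝ) + 1) ^ p) ζ := by
    refine Summable.hasSum ?_
    simpa using (summable_nat_add_iff 1).mpr (Real.summable_nat_rpow.mpr hp)
  have hcentered : HasSum (fun k : ℤ => (|(k : ℝ)| + 1) ^ p) (ζ + (ζ - 1)) := by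
    refine HasSum.of_nat_of_neg_add_one (by simpa using hζ) ?_
    have htail := (hasSum_nat_add_iff' 1).mpr hζ
    simp only [Finset.range_one, Finset.sum_singleton, Nat.cast_zero, zero_add, one_rpow,
      Nat.cast_add, Nat.cast_one] at htail
    refine htail.congr_fun fun k => ?_
    push_cast
    rw [abs_neg, abs_of_nonneg (by positivity)]
  have hshift := (Equiv.addRight (1 : ℤ)).hasSum_iff.mpr hcentered
  convert hshift using 1
  · ext k; simp
  · ring

theorem stmt_3_general (D δ a b γ ε : ℝ) (hδ : 0 < δ) (hab : a ≤ b) (hb : b ≤ 0)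
    (heg : ε - γ < -1)
    (A : ℤ → ℤ → ℝ) (hA : ∀ m n : ℤ, n ≤ m → A m n = D * ((m : ℝ) - n + 1) ^ a * (|(n : ℝ)| + 1) ^ ε)
    (Bd : ℤ → ℤ → ℝ) (hB : ∀ m n : ℤ, m ≤ n → Bd m n = D * ((n : ℝ) - m + 1) ^ b * (|(n : ℝ)| + 1) ^ ε)
    (P : ℤ → ℝ) (hP : ∀ k : ℤ, P k = δ * (|(k : ℝ) + 1| + 1) ^ (-γ))
    (m n : ℤ) (hmn : n ≤ m) :
    (∑' k : {k : ℤ // k < n}, A m ((k : ℤ) + 1) * P k * Bd k n)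
      + (∑ k ∈ Finset.Ico n m, A m (k + 1) * P k * A k n)
      + (∑' k : {k : ℤ // m ≤ k}, Bd m ((k : ℤ) + 1) * P k * A k n)
      ≤ (2 : ℝ) ^ (-a) * D ^ 2 * δ * ((m : ℝ) - n + 1) ^ a * (|(n : ℝ)| + 1) ^ ε *
          (2 * (∑' k : ℕ, ((k : ℝ) + 1) ^ (ε - γ)) - 1) := by
  have ha : a ≤ 0 := hab.trans hb
  have hs : (0 : ℝ) < m - n + 1 := by
    have : (n : ℝ) ≤ m := by exact_mod_cast hmn
    linarith
  have hu : ∀ k : ℤ, (0 : ℝ) < |(k : ℝ) + 1| + 1 := fun k => by positivity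
  have hv : (0 : ℝ) ≤ |(n : ℝ)| + 1 := by positivity
  obtain ⟨K, hK⟩ : ∃ K : ℝ,
      K = D ^ 2 * δ * (|(n : ℝ)| + 1) ^ ε * (2 ^ (-a) * ((m : ℝ) - n + 1) ^ a) := ⟨_, rfl⟩
  have hζ := (hasSum_int_abs_add_one_rpow heg).mul_left K
  have lower : ∀ k < n,
      A m (k + 1) * P k * Bd k n ∈ Set.Icc 0 (K * (|(k : ℝ) + 1| + 1) ^ (ε - γ)) := by
    intro k hk
    have hk' : (k : ℝ) + 1 ≤ n := by exact_mod_cast hk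
    rw [hA _ _ (by omega), hP, hB _ _ (by omega), hK]
    push_cast
    exact kernel_term_mem_Icc hδ.le (hu k) hv (rpow_nonneg (by linarith) _)
      (rpow_nonneg (by linarith) _)
      (rpow_mul_rpow_le_two_rpow_neg_mul_rpow_of_le ha hb hs (by linarith) (by linarith))
  have middle : ∀ k ∈ Finset.Ico n m,
      A m (k + 1) * P k * A k n ∈ Set.Icc 0 (K * (|(k : ℝ) + 1| + 1) ^ (ε - γ)) := by
    intro k hk
    obtain ⟨hnk, hkm⟩ := Finset.mem_Ico.mp hk
    have hnk' : (n : ℝ) ≤ k := by exact_mod_cast hnk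
    have hkm' : (k : ℝ) + 1 ≤ m := by exact_mod_cast hkm
    rw [hA _ _ (by omega), hP, hA _ _ hnk, hK]
    push_cast
    exact kernel_term_mem_Icc hδ.le (hu k) hv (rpow_nonneg (by linarith) _)
      (rpow_nonneg (by linarith) _)
      (rpow_mul_rpow_le_two_rpow_neg_mul_rpow_of_add_eq ha (by linarith) (by linarith) (by ring))
  have upper : ∀ k, m ≤ k →
      Bd m (k + 1) * P k * A k n ∈ Set.Icc 0 (K * (|(k : ℝ) + 1| + 1) ^ (ε - γ)) := by
    intro k hk
    have hk' : (m : ℝ) ≤ k := by exact_mod_cast hk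
    rw [hB _ _ (by omega), hP, hA _ _ (by omega), hK]
    push_cast
    exact kernel_term_mem_Icc hδ.le (hu k) hv (rpow_nonneg (by linarith) _)
      (rpow_nonneg (by linarith) _) ((mul_comm _ _).trans_le
        (rpow_mul_rpow_le_two_rpow_neg_mul_rpow_of_le ha hb hs (by linarith) (by linarith)))
  calc _ ≤ ∑' k : {k : ℤ // k < n}, K * (|(k : ℝ) + 1| + 1) ^ (ε - γ)
        + ∑ k ∈ Finset.Ico n m, K * (|(k : ℝ) + 1| + 1) ^ (ε - γ)
        + ∑' k : {k : ℤ // m ≤ k}, K * (|(k : ℝ) + 1| + 1) ^ (ε - γ) := by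
        refine add_le_add (add_le_add ?_ (Finset.sum_le_sum fun k hk => (middle k hk).2)) ?_
        · exact tsum_le_tsum_of_nonneg_of_le (fun k => (lower k k.2).1)
            (fun k => (lower k k.2).2) (hζ.summable.subtype _)
        · exact tsum_le_tsum_of_nonneg_of_le (fun k => (upper k k.2).1)
            (fun k => (upper k k.2).2) (hζ.summable.subtype _)
    _ = K * (2 * ∑' k : ℕ, ((k : ℝ) + 1) ^ (ε - γ) - 1) :=
        (hζ.summable.tsum_Iio_add_sum_Ico_add_tsum_Ici hmn).trans hζ.tsum_eq
    _ = _ := by rw [hK]; ring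

/-- Summation estimate for `λ_{m,n}` in the robustness of nonuniform polynomial dichotomies
on `ℤ`, with bounds `a_{m,n} = D(m-n+1)^a(|n|+1)^ε`, `b_{m,n} = D(n-m+1)^b(|n|+1)^ε` and
perturbations `‖B_k‖ = δ(|k+1|+1)^{-γ}`. -/
theorem stmt_3 (D δ a b γ ε : ℝ) (hD : 1 ≤ D) (hδ : 0 < δ) (hab : a ≤ b) (hb : b ≤ 0)
    (hε : 0 ≤ ε) (heg : ε - γ < -1)
    (A : ℤ → ℤ → ℝ) (hA : ∀ m n : ℤ, n ≤ m → A m n = D * ((m : ℝ) - n + 1) ^ a * (|(n : ℝ)| + 1) ^ ε)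
    (Bd : ℤ → ℤ → ℝ) (hB : ∀ m n : ℤ, m ≤ n → Bd m n = D * ((n : ℝ) - m + 1) ^ b * (|(n : ℝ)| + 1) ^ ε)
    (P : ℤ → ℝ) (hP : ∀ k : ℤ, P k = δ * (|(k : ℝ) + 1| + 1) ^ (-γ))
    (m n : ℤ) (hmn : n ≤ m) :
    (∑' k : {k : ℤ // k < n}, A m ((k : ℤ) + 1) * P k * Bd k n)
      + (∑ k ∈ Finset.Ico n m, A m (k + 1) * P k * A k n)
      + (∑' k : {k : ℤ // m ≤ k}, Bd m ((k : ℤ) + 1) * P k * A k n)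
      ≤ (2 : ℝ) ^ (-a) * D ^ 2 * δ * ((m : ℝ) - n + 1) ^ a * (|(n : ℝ)| + 1) ^ ε *
          (2 * (∑' k : ℕ, ((k : ℝ) + 1) ^ (ε - γ)) - 1) :=
  stmt_3_general D δ a b γ ε hδ hab hb heg A hA Bd hB P hP m n hmn
end

section
/- Let $(a_n)_{n\in\mathbb{Z}}$, $(b_n)_{n\in\mathbb{Z}}$, $(c_n)_{n\in\mathbb{Z}}$ be positive sequences, $C$ a constant with $\frac{a_m b_n}{a_n b_m} \le C$ for all $m \le n$, and $(\beta_k)_{k\in\mathbb{Z}}$ positive with $\beta = \sum_{k\in\mathbb{Z}} \beta_k < \infty$. With $a_{m,n} = \frac{a_n}{a_m}c_n$ ($m \ge n$), $b_{m,n} = \frac{b_n}{b_m}c_n$ ($m \le n$), and $B_k = \frac{a_k}{a_{k+1}c_{k+1}}\beta_k$, one has for all $m \le n$: $\sum_{k=-\infty}^{m-1} a_{m,k+1} B_k b_{k,n} + \sum_{k=m}^{n-1} b_{m,k+1} B_k b_{k,n} + \sum_{k=n}^{\infty} b_{m,k+1} B_k a_{k,n} \le \frac{b_n}{b_m} c_n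 \beta C$. -/
/-- Estimate of `μ_{m,n}` for general dichotomies with product-form bounds on `ℤ`. -/
theorem stmt_11 (a b c : ℤ → ℝ) (ha : ∀ n, 0 < a n) (hb : ∀ n, 0 < b n)
    (hc : ∀ n, 0 < c n) (C : ℝ)
    (hC : ∀ m n : ℤ, m ≤ n → a m * b n / (a n * b m) ≤ C)
    (β : ℤ → ℝ) (hβpos : ∀ k, 0 < β k) (hβ : Summable β)
    (A : ℤ → ℤ → ℝ) (hA : ∀ m n : ℤ, n ≤ m → A m n = a n / a m * c n)
    (Bd : ℤ → ℤ → ℝ) (hBd : ∀ m n : ℤ, m ≤ n → Bd m n = b n / b m * c n)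
    (B : ℤ → ℝ) (hB : ∀ k : ℤ, B k = a k / (a (k + 1) * c (k + 1)) * β k)
    (m n : ℤ) (hmn : m ≤ n) :
    (∑' k : {k : ℤ // k < m}, A m ((k : ℤ) + 1) * B k * Bd k n)
      + (∑ k ∈ Finset.Ico m n, Bd m (k + 1) * B k * Bd k n)
      + (∑' k : {k : ℤ // n ≤ k}, Bd m ((k : ℤ) + 1) * B k * A k n)
      ≤ b n / b m * c n * (∑' k : ℤ, β k) * C := by
  set D : ℝ := b n / b m * c n with hD
  have hDpos : 0 < D := mul_pos (div_pos (hb n) (hb m)) (hc n)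
  have hC1 : (1 : ℝ) ≤ C := by
    have h := hC m m le_rfl
    rwa [div_self (mul_pos (ha m) (hb m)).ne'] at h
  have hC0 : 0 ≤ C := le_trans zero_le_one hC1
  -- pointwise identities
  have key1 : ∀ k : ℤ, k < m →
      A m (k + 1) * B k * Bd k n = (a k * b m / (a m * b k)) * (D * β k) := by
    intro k hk
    rw [hA m (k + 1) (by omega), hB k, hBd k n (by omega), hD]
    have h1 := (ha (k + 1)).ne'
    have h2 := (hc (k + 1)).ne'
    have h3 := (ha m).ne'
    have h4 := (hb k).ne'
    have h5 := (hb m).ne'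
    field_simp
  have key2 : ∀ k : ℤ, m ≤ k → k < n →
      Bd m (k + 1) * B k * Bd k n = (a k * b (k + 1) / (a (k + 1) * b k)) * (D * β k) := by
    intro k hk1 hk2
    rw [hBd m (k + 1) (by omega), hB k, hBd k n (by omega), hD]
    have h1 := (ha (k + 1)).ne'
    have h2 := (hc (k + 1)).ne'
    have h3 := (hb m).ne'
    have h4 := (hb k).ne'
    field_simp
  have key3 : ∀ k : ℤ, n ≤ k →
      Bd m (k + 1) * B k * A k n = (a n * b (k + 1) / (a (k + 1) * b n)) * (D * β k) := by
    intro k hk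
    rw [hBd m (k + 1) (by omega), hB k, hA k n (by omega), hD]
    have h1 := (ha (k + 1)).ne'
    have h2 := (hc (k + 1)).ne'
    have h3 := (hb m).ne'
    have h4 := (ha k).ne'
    have h5 := (hb n).ne'
    field_simp
  -- bounds
  have bd1 : ∀ k : ℤ, k < m → A m (k + 1) * B k * Bd k n ≤ C * (D * β k) := by
    intro k hk
    rw [key1 k hk]
    exact mul_le_mul_of_nonneg_right (hC k m (le_of_lt hk)) (mul_pos hDpos (hβpos k)).le
  have bd2 : ∀ k : ℤ, m ≤ k → k < n → Bd m (k + 1) * B k * Bd k n ≤ C * (D * β k) := by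
    intro k hk1 hk2
    rw [key2 k hk1 hk2]
    exact mul_le_mul_of_nonneg_right (hC k (k + 1) (by omega)) (mul_pos hDpos (hβpos k)).le
  have bd3 : ∀ k : ℤ, n ≤ k → Bd m (k + 1) * B k * A k n ≤ C * (D * β k) := by
    intro k hk
    rw [key3 k hk]
    exact mul_le_mul_of_nonneg_right (hC n (k + 1) (by omega)) (mul_pos hDpos (hβpos k)).le
  -- summability
  have hβs1 : Summable (fun k : {k : ℤ // k < m} => β (k : ℤ)) := hβ.subtype _
  have hβs3 : Summable (fun k : {k : ℤ // n ≤ k} => β (k : ℤ)) := hβ.subtype _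
  have hs1b : Summable (fun k : {k : ℤ // k < m} => C * (D * β (k : ℤ))) := by
    simpa [mul_assoc] using hβs1.mul_left (C * D)
  have hs3b : Summable (fun k : {k : ℤ // n ≤ k} => C * (D * β (k : ℤ))) := by
    simpa [mul_assoc] using hβs3.mul_left (C * D)
  have hs1 : Summable (fun k : {k : ℤ // k < m} => A m ((k : ℤ) + 1) * B k * Bd k n) := by
    apply Summable.of_nonneg_of_le _ (fun k : {k : ℤ // k < m} => bd1 k.1 k.2) hs1b
    intro k
    rw [key1 k.1 k.2]
    exact mul_nonneg (div_nonneg (mul_nonneg (ha _).le (hb _).le)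
      (mul_nonneg (ha _).le (hb _).le)) (mul_pos hDpos (hβpos _)).le
  have hs3 : Summable (fun k : {k : ℤ // n ≤ k} => Bd m ((k : ℤ) + 1) * B k * A k n) := by
    apply Summable.of_nonneg_of_le _ (fun k : {k : ℤ // n ≤ k} => bd3 k.1 k.2) hs3b
    intro k
    rw [key3 k.1 k.2]
    exact mul_nonneg (div_nonneg (mul_nonneg (ha _).le (hb _).le)
      (mul_nonneg (ha _).le (hb _).le)) (mul_pos hDpos (hβpos _)).le
  -- tsum bounds
  have T1 : (∑' k : {k : ℤ // k < m}, A m ((k : ℤ) + 1) * B k * Bd k n)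
      ≤ C * D * (∑' k : {k : ℤ // k < m}, β (k : ℤ)) := by
    calc (∑' k : {k : ℤ // k < m}, A m ((k : ℤ) + 1) * B k * Bd k n)
        ≤ ∑' k : {k : ℤ // k < m}, C * (D * β (k : ℤ)) :=
          Summable.tsum_le_tsum (fun k : {k : ℤ // k < m} => bd1 k.1 k.2) hs1 hs1b
      _ = C * D * (∑' k : {k : ℤ // k < m}, β (k : ℤ)) := by
          rw [← tsum_mul_left]; congr 1; ext k; ring
  have T3 : (∑' k : {k : ℤ // n ≤ k}, Bd m ((k : ℤ) + 1) * B k * A k n)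
      ≤ C * D * (∑' k : {k : ℤ // n ≤ k}, β (k : ℤ)) := by
    calc (∑' k : {k : ℤ // n ≤ k}, Bd m ((k : ℤ) + 1) * B k * A k n)
        ≤ ∑' k : {k : ℤ // n ≤ k}, C * (D * β (k : ℤ)) :=
          Summable.tsum_le_tsum (fun k : {k : ℤ // n ≤ k} => bd3 k.1 k.2) hs3 hs3b
      _ = C * D * (∑' k : {k : ℤ // n ≤ k}, β (k : ℤ)) := by
          rw [← tsum_mul_left]; congr 1; ext k; ring
  have T2 : (∑ k ∈ Finset.Ico m n, Bd m (k + 1) * B k * Bd k n)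
      ≤ C * D * (∑ k ∈ Finset.Ico m n, β k) := by
    rw [Finset.mul_sum]
    apply Finset.sum_le_sum
    intro k hk
    rw [Finset.mem_Ico] at hk
    calc Bd m (k + 1) * B k * Bd k n ≤ C * (D * β k) := bd2 k hk.1 hk.2
      _ = C * D * β k := by ring
  -- partition of the total sum
  have hpart : (∑' k : {k : ℤ // k < m}, β (k : ℤ))
      + (∑ k ∈ Finset.Ico m n, β k)
      + (∑' k : {k : ℤ // n ≤ k}, β (k : ℤ)) = ∑' k : ℤ, β k := by
    have e1 : (∑' k : {k : ℤ // k < m}, β (k : ℤ))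
        = ∑' k : ℤ, Set.indicator {x : ℤ | x < m} β k := tsum_subtype _ _
    have e2 : (∑ k ∈ Finset.Ico m n, β k)
        = ∑' k : ℤ, Set.indicator (↑(Finset.Ico m n) : Set ℤ) β k :=
      sum_eq_tsum_indicator _ _
    have e3 : (∑' k : {k : ℤ // n ≤ k}, β (k : ℤ))
        = ∑' k : ℤ, Set.indicator {x : ℤ | n ≤ x} β k := tsum_subtype _ _
    rw [e1, e2, e3,
      ← Summable.tsum_add (hβ.indicator _) (hβ.indicator _),
      ← Summable.tsum_add ((hβ.indicator _).add (hβ.indicator _)) (hβ.indicator _)]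
    congr 1
    funext k
    simp only [Set.indicator_apply, Set.mem_setOf_eq, Finset.coe_Ico, Set.mem_Ico]
    split_ifs <;> first | ring1 | (exfalso; omega)
  calc (∑' k : {k : ℤ // k < m}, A m ((k : ℤ) + 1) * B k * Bd k n)
      + (∑ k ∈ Finset.Ico m n, Bd m (k + 1) * B k * Bd k n)
      + (∑' k : {k : ℤ // n ≤ k}, Bd m ((k : ℤ) + 1) * B k * A k n)
      ≤ C * D * (∑' k : {k : ℤ // k < m}, β (k : ℤ))
        + C * D * (∑ k ∈ Finset.Ico m n, β k)
        + C * D * (∑' k : {k : ℤ // n ≤ k}, β (k : ℤ)) :=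
        add_le_add (add_le_add T1 T2) T3
    _ = C * D * ((∑' k : {k : ℤ // k < m}, β (k : ℤ))
        + (∑ k ∈ Finset.Ico m n, β k)
        + (∑' k : {k : ℤ // n ≤ k}, β (k : ℤ))) := by ring
    _ = C * D * (∑' k : ℤ, β k) := by rw [hpart]
    _ = D * (∑' k : ℤ, β k) * C := by ring
end
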